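/- arXiv:1010.4472 — 5 statements merged into one kernel-verified Lean document; each statement's English description precedes it below -/
import Mathlib

section
/- Let f_{n,p}(x) = n(n+1)(2n-p+1)x⁴ - 4(n+1)(n²+2np+n-p²+p)x³ + 2(n³+9n²p+7n²+4np²+16np+8n-2p³+2p²+6p+2)x² - 8(n+1)(p+1)(n+3p+1)x + 8(p+1)²(n+p+1). Then for integers n ≥ 3 and n/2 ≤ p ≤ n-1, the second derivative f_{n,p}'' is positive for all real x. -/
/-! Writing `f = A x⁴ - 4B x³ + 2C x² - D x + E`, the second derivative is the quadratic
`12A x² - 24B x + 4C`, with `A > 0`. Its discriminant is `192 (3B² - AC)`, and in the coordinates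
`q = 2p - n ≥ 0`, `r = n - 1 - p ≥ 0` the polynomial `AC - 3B²` has only positive coefficients. -/

theorem deriv_quartic (a b c d e : ℝ) :
    deriv (fun x => a*x^4 + b*x^3 + c*x^2 + d*x + e)
      = fun x => 4*a*x^3 + 3*b*x^2 + 2*c*x + d := by
  funext x
  simp (disch := fun_prop)
  ring

theorem iteratedDeriv_two_quartic (a b c d e x : ℝ) :
    iteratedDeriv 2 (fun x => a*x^4 + b*x^3 + c*x^2 + d*x + e) x
      = 12*a*x^2 + 6*b*x + 2*c := by
  rw [iteratedDeriv_succ, iteratedDeriv_one, deriv_quartic]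
  simp (disch := fun_prop)
  ring

theorem quadratic_pos_of_discrim_neg {a b c : ℝ} (ha : 0 < a) (h : discrim a b c < 0) (x : ℝ) :
    0 < a*x^2 + b*x + c := by
  rw [discrim] at h
  nlinarith [sq_nonneg (2*a*x + b)]

theorem discrim_second_deriv_neg (n p : ℝ) (hp1 : n/2 ≤ p) (hp2 : p ≤ n - 1) :
    discrim (12*(n*(n+1)*(2*n-p+1))) (-24*((n+1)*(n^2+2*n*p+n-p^2+p)))
      (4*(n^3+9*n^2*p+7*n^2+4*n*p^2+16*n*p+8*n-2*p^3+2*p^2+6*p+2)) < 0 := by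
  obtain ⟨q, r, rfl, rfl⟩ : ∃ q r, n = q + 2*r + 2 ∧ p = q + r + 1 :=
    ⟨2*p - n, n - 1 - p, by ring, by ring⟩
  have hq : 0 ≤ q := by linarith
  have hr : 0 ≤ r := by linarith
  rw [discrim, ← neg_pos]
  ring_nf
  positivity

theorem stmt_2_general (n p : ℤ) (hp1 : (n : ℝ)/2 ≤ (p : ℝ)) (hp2 : p ≤ n - 1)
    (f : ℝ → ℝ)
    (hf : f = fun x => (n : ℝ)*(n+1)*(2*n-p+1)*x^4
      - 4*(n+1)*(n^2+2*n*p+n-p^2+p)*x^3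
      + 2*(n^3+9*n^2*p+7*n^2+4*n*p^2+16*n*p+8*n-2*p^3+2*p^2+6*p+2)*x^2
      - 8*(n+1)*(p+1)*(n+3*p+1)*x + 8*(p+1)^2*(n+p+1)) :
    ∀ x : ℝ, 0 < iteratedDeriv 2 f x := by
  intro x
  have hp2' : (p : ℝ) ≤ n - 1 := by exact_mod_cast hp2
  have hA : 0 < 12*((n : ℝ)*(n+1)*(2*n-p+1)) := by
    have : (0 : ℝ) < n := by linarith
    have : (0 : ℝ) < 2*n - p + 1 := by linarith
    positivity
  have hquartic : f = fun x => (n : ℝ)*(n+1)*(2*n-p+1)*x^4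
      + (-4*((n+1)*(n^2+2*n*p+n-p^2+p)))*x^3
      + 2*(n^3+9*n^2*p+7*n^2+4*n*p^2+16*n*p+8*n-2*p^3+2*p^2+6*p+2)*x^2
      + (-8*(n+1)*(p+1)*(n+3*p+1))*x + 8*(p+1)^2*(n+p+1) := by
    rw [hf]; funext x; ring
  rw [hquartic, iteratedDeriv_two_quartic]
  convert quadratic_pos_of_discrim_neg hA (discrim_second_deriv_neg _ _ hp1 hp2') x using 1
  ring

theorem stmt_2 (n p : ℤ) (hn : 3 ≤ n) (hp1 : (n : ℝ)/2 ≤ (p : ℝ)) (hp2 : p ≤ n - 1)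
    (f : ℝ → ℝ)
    (hf : f = fun x => (n : ℝ)*(n+1)*(2*n-p+1)*x^4
      - 4*(n+1)*(n^2+2*n*p+n-p^2+p)*x^3
      + 2*(n^3+9*n^2*p+7*n^2+4*n*p^2+16*n*p+8*n-2*p^3+2*p^2+6*p+2)*x^2
      - 8*(n+1)*(p+1)*(n+3*p+1)*x + 8*(p+1)^2*(n+p+1)) :
    ∀ x : ℝ, 0 < iteratedDeriv 2 f x :=
  stmt_2_general n p hp1 hp2 f hf
end

section
/- For integers n ≥ 3 and real p with n/2 ≤ p ≤ n-1, the quantity h_{n,p} = n⁵ - 5n⁴p - 6n⁴ + 7n³p² - 4n³p - 14n³ - 4n²p³ + 20n²p² + 4n²p - 9n² + np⁴ - 14np³ + 13np² + 2np - 2n + 3p⁴ - 6p³ + 3p² is negative. -/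
/-! With `u = p - n/2 ≥ 0` and `v = n - 1 - p ≥ 0` one has `n = 2u + 2v + 2` and `p = 2u + v + 1`;
in these coordinates `h_{n,p}` is a polynomial in `u, v` all of whose coefficients are negative. -/

open NNReal

def discrSecondDeriv (n p : ℝ) : ℝ :=
  n^5 - 5*n^4*p - 6*n^4 + 7*n^3*p^2 - 4*n^3*p - 14*n^3 - 4*n^2*p^3 + 20*n^2*p^2
    + 4*n^2*p - 9*n^2 + n*p^4 - 14*n*p^3 + 13*n*p^2 + 2*n*p - 2*n
    + 3*p^4 - 6*p^3 + 3*p^2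

theorem discrSecondDeriv_endpoint_coords (u v : ℝ) :
    discrSecondDeriv (2*u + 2*v + 2) (2*u + v + 1) =
      -(188 + 612*v + 755*v^2 + 428*v^3 + 103*v^4 + 6*v^5 + 504*u + 1264*u*v + 1114*u*v^2
        + 388*u*v^3 + 38*u*v^4 + 464*u^2 + 848*u^2*v + 472*u^2*v^2 + 72*u^2*v^3 + 192*u^3
        + 224*u^3*v + 56*u^3*v^2 + 32*u^4 + 16*u^4*v) := by
  unfold discrSecondDeriv
  ring

theorem discrSecondDeriv_neg {n p : ℝ} (hp1 : n/2 ≤ p) (hp2 : p ≤ n - 1) :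
    discrSecondDeriv n p < 0 := by
  obtain ⟨u, hu⟩ : ∃ u : ℝ≥0, (u : ℝ) = p - n/2 := ⟨⟨p - n/2, by linarith⟩, rfl⟩
  obtain ⟨v, hv⟩ : ∃ v : ℝ≥0, (v : ℝ) = n - 1 - p := ⟨⟨n - 1 - p, by linarith⟩, rfl⟩
  have hn : n = 2*u + 2*v + 2 := by rw [hu, hv]; ring
  have hp : p = 2*u + v + 1 := by rw [hu, hv]; ring
  rw [hn, hp, discrSecondDeriv_endpoint_coords, neg_neg_iff_pos]
  positivity

theorem stmt_3_general (n : ℤ) (p : ℝ) (hp1 : (n : ℝ)/2 ≤ p) (hp2 : p ≤ (n : ℝ) - 1) :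
    (n : ℝ)^5 - 5*n^4*p - 6*n^4 + 7*n^3*p^2 - 4*n^3*p - 14*n^3 - 4*n^2*p^3 + 20*n^2*p^2
      + 4*n^2*p - 9*n^2 + n*p^4 - 14*n*p^3 + 13*n*p^2 + 2*n*p - 2*n
      + 3*p^4 - 6*p^3 + 3*p^2 < 0 :=
  discrSecondDeriv_neg hp1 hp2

theorem stmt_3 (n : ℤ) (p : ℝ) (hn : 3 ≤ n) (hp1 : (n : ℝ)/2 ≤ p) (hp2 : p ≤ (n : ℝ) - 1) :
    (n : ℝ)^5 - 5*n^4*p - 6*n^4 + 7*n^3*p^2 - 4*n^3*p - 14*n^3 - 4*n^2*p^3 + 20*n^2*p^2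
      + 4*n^2*p - 9*n^2 + n*p^4 - 14*n*p^3 + 13*n*p^2 + 2*n*p - 2*n
      + 3*p^4 - 6*p^3 + 3*p^2 < 0 :=
  stmt_3_general n p hp1 hp2
end

section
/- Let Q_{n,p}(x) = n²(3n+4)x⁴ - 8n(2n²+np+5n-p²+3)x³ + 2(13n³+8n²p+36n²-8np²+16np+40n-16p²+16)x² - 8n(2n²+np+5n-p²+3)x + n²(3n+4). For integers n ≥ 3 and 1 ≤ p ≤ n-1, one has Q_{n,p}(0) > 0, Q_{n,p}(1) > 0, and Q_{n,p}(1/2) < 0. -/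
/-!
`Q 0 = n²(3n+4)` and `Q 1 = 32(p+1)(n-p+1)` are visibly positive, while
`-16 Q(1/2)`, rewritten in `a = p - 1` and `b = n - p - 1`, becomes a polynomial symmetric in `a, b`
whose only negative coefficient is the constant `-168`. Since `a, b` are nonnegative integers
with `a + b = n - 2 ≥ 1`, we have `a ≤ a²`, `b ≤ b²` and `a³ + b³ ≥ 1`, which outweighs it.
Integrality is essential: for `n = 3, p = 3/2` the value `Q(1/2)` is positive.
-/

lemma symmetric_cubic_pos {a b : ℤ} (ha : 0 ≤ a) (hb : 0 ≤ b) (hab : 1 ≤ a + b) :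
    0 < 5*(a^3+b^3) + 31*a*b*(a+b) + 90*(a^2+b^2) + 84*a*b + 76*(a+b) - 168 := by
  nlinarith [Int.le_self_sq a, Int.le_self_sq b, mul_nonneg ha hb,
    mul_nonneg (mul_nonneg ha hb) (add_nonneg ha hb), pow_nonneg ha 3, pow_nonneg hb 3]

lemma neg_sixteen_mul_Q_half_pos {n p : ℤ} (hn : 3 ≤ n) (hp1 : 1 ≤ p) (hp2 : p ≤ n - 1) :
    0 < 5*n^3+16*n^2*p+44*n^2-16*n*p^2-128*n*p-80*n+128*p^2-128 := by
  have h := symmetric_cubic_pos (a := p - 1) (b := n - p - 1) (by linarith) (by linarith)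
    (by linarith)
  linear_combination h

theorem stmt_9 (n p : ℤ) (hn : 3 ≤ n) (hp1 : 1 ≤ p) (hp2 : p ≤ n - 1) (Q : ℝ → ℝ)
    (hQ : Q = fun x => (n : ℝ)^2*(3*n+4)*x^4 - 8*n*(2*n^2+n*p+5*n-p^2+3)*x^3
      + 2*(13*n^3+8*n^2*p+36*n^2-8*n*p^2+16*n*p+40*n-16*p^2+16)*x^2
      - 8*n*(2*n^2+n*p+5*n-p^2+3)*x + n^2*(3*n+4)) :
    Q 0 > 0 ∧ Q 1 > 0 ∧ Q (1/2) < 0 := by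
  have hn' : (3:ℝ) ≤ n := by exact_mod_cast hn
  have hp1' : (1:ℝ) ≤ p := by exact_mod_cast hp1
  have hp2' : (p:ℝ) ≤ n - 1 := by exact_mod_cast hp2
  have hE : (0:ℝ) < 5*n^3+16*n^2*p+44*n^2-16*n*p^2-128*n*p-80*n+128*p^2-128 := by
    exact_mod_cast neg_sixteen_mul_Q_half_pos hn hp1 hp2
  subst hQ
  refine ⟨?_, ?_, ?_⟩
  · linear_combination mul_pos (pow_pos (by linarith : (0:ℝ) < n) 2) (by linarith : (0:ℝ) < 3*n+4)
  · linear_combination 32 * mul_pos (by linarith : (0:ℝ) < p + 1) (by linarith : (0:ℝ) < n - p + 1)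
  · linear_combination hE / 16
end

section
/- Let Q_{n,p}(x) = n²(3n+4)x⁴ - 8n(2n²+np+5n-p²+3)x³ + 2(13n³+8n²p+36n²-8np²+16np+40n-16p²+16)x² - 8n(2n²+np+5n-p²+3)x + n²(3n+4). For integers n ≥ 3 and 1 ≤ p ≤ n-1, the equation Q_{n,p}(x) = 0 has four distinct positive real solutions: two in the open interval (0,1) and their reciprocals in (1,∞). -/
/-!
The quartic is palindromic, so `x ↦ 1/x` permutes its roots. It is positive at `0` and at `1`
(where it equals `32 (p + 1) (n + 1 - p)`) and negative at `1/2`, so the intermediate value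
theorem gives a root in each of `(0, 1/2)` and `(1/2, 1)`; their reciprocals are the other two.
-/

def palindromicQuartic (a b c x : ℝ) : ℝ := a * x ^ 4 + b * x ^ 3 + c * x ^ 2 + b * x + a

theorem palindromicQuartic_one_div_eq_zero {a b c x : ℝ} (h : palindromicQuartic a b c x = 0) :
    palindromicQuartic a b c (1 / x) = 0 := by
  rcases eq_or_ne x 0 with rfl | hx
  · simpa using h
  · have hscale : palindromicQuartic a b c (1 / x) * x ^ 4 = palindromicQuartic a b c x := by
      unfold palindromicQuartic
      field_simp
      ring
    rw [h] at hscale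
    exact (mul_eq_zero.1 hscale).resolve_right (pow_ne_zero 4 hx)

theorem exists_zero_Ioo_zero_Ioo_of_pos_neg_pos {f : ℝ → ℝ} {u v w : ℝ} (hf : ContinuousOn f (Set.Icc u w))
    (huv : u ≤ v) (hvw : v ≤ w) (hu : 0 < f u) (hv : f v < 0) (hw : 0 < f w) :
    ∃ a ∈ Set.Ioo u v, ∃ b ∈ Set.Ioo v w, f a = 0 ∧ f b = 0 := by
  obtain ⟨a, ha, hfa⟩ := intermediate_value_Ioo' huv (hf.mono (Set.Icc_subset_Icc_right hvw))
    ⟨hv, hu⟩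
  obtain ⟨b, hb, hfb⟩ := intermediate_value_Ioo hvw (hf.mono (Set.Icc_subset_Icc_left huv))
    ⟨hv, hw⟩
  exact ⟨a, ha, b, hb, hfa, hfb⟩

/-- The quartic `Q_{n,p}` of the Einstein equation on `Sp(n)/(U(p) × U(n-p))`. -/
def einsteinQuartic (n p : ℝ) : ℝ → ℝ :=
  palindromicQuartic (n ^ 2 * (3 * n + 4)) (-(8 * n * (2 * n ^ 2 + n * p + 5 * n - p ^ 2 + 3)))
    (2 * (13 * n ^ 3 + 8 * n ^ 2 * p + 36 * n ^ 2 - 8 * n * p ^ 2 + 16 * n * p + 40 * n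
      - 16 * p ^ 2 + 16))

theorem einsteinQuartic_zero_pos {n : ℝ} (p : ℝ) (hn : 0 < n) : 0 < einsteinQuartic n p 0 := by
  simp only [einsteinQuartic, palindromicQuartic]
  norm_num
  positivity

theorem einsteinQuartic_one (n p : ℝ) : einsteinQuartic n p 1 = 32 * (p + 1) * (n + 1 - p) := by
  simp only [einsteinQuartic, palindromicQuartic]
  ring

theorem einsteinQuartic_one_pos {n p : ℝ} (hp0 : -1 < p) (hpn : p < n + 1) :
    0 < einsteinQuartic n p 1 := by
  rw [einsteinQuartic_one]
  have : 0 < p + 1 := by linarith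
  have : 0 < n + 1 - p := by linarith
  positivity

theorem einsteinQuartic_one_half (n p : ℝ) :
    16 * einsteinQuartic n p (1 / 2) = 128 - 128 * p ^ 2 + 80 * n + 128 * n * p + 16 * n * p ^ 2
      - 44 * n ^ 2 - 16 * n ^ 2 * p - 5 * n ^ 3 := by
  simp only [einsteinQuartic, palindromicQuartic]
  ring

/-- Integrality of `p` matters: the value at `1/2` is positive at `n = 3`, `p = 3/2`. -/
theorem einsteinQuartic_one_half_neg {n p : ℤ} (hn : 3 ≤ n) (hp1 : 1 ≤ p) (hp2 : p ≤ n - 1) :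
    einsteinQuartic n p (1 / 2) < 0 := by
  have hp12 : (0 : ℝ) ≤ (p - 1) * (p - 2) := by
    rcases hp1.eq_or_lt with rfl | hp
    · norm_num
    · have : (2 : ℝ) ≤ p := by exact_mod_cast hp
      have : (1 : ℝ) ≤ p := by exact_mod_cast hp1
      nlinarith
  have hn3 : (0 : ℝ) ≤ n - 3 := by
    have : (3 : ℝ) ≤ n := by exact_mod_cast hn
    linarith
  have hp1' : (0 : ℝ) ≤ p - 1 := by
    have : (1 : ℝ) ≤ p := by exact_mod_cast hp1
    linarith
  have hnp : (0 : ℝ) ≤ n - 1 - p := by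
    have : ((p : ℤ) : ℝ) ≤ ((n - 1 : ℤ) : ℝ) := by exact_mod_cast hp2
    push_cast at this
    linarith
  have := einsteinQuartic_one_half n p
  nlinarith [mul_nonneg (mul_nonneg hn3 hp1') hnp, mul_nonneg hn3 hnp,
    mul_nonneg hn3 (mul_nonneg hn3 hn3), mul_nonneg hn3 hn3]

theorem stmt_10 (n p : ℤ) (hn : 3 ≤ n) (hp1 : 1 ≤ p) (hp2 : p ≤ n - 1) (Q : ℝ → ℝ)
    (hQ : Q = fun x => (n : ℝ)^2*(3*n+4)*x^4 - 8*n*(2*n^2+n*p+5*n-p^2+3)*x^3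
      + 2*(13*n^3+8*n^2*p+36*n^2-8*n*p^2+16*n*p+40*n-16*p^2+16)*x^2
      - 8*n*(2*n^2+n*p+5*n-p^2+3)*x + n^2*(3*n+4)) :
    ∃ a b : ℝ, 0 < a ∧ a < b ∧ b < 1 ∧
      Q a = 0 ∧ Q b = 0 ∧ Q (1/a) = 0 ∧ Q (1/b) = 0 := by
  have hQ : Q = einsteinQuartic n p := by
    subst hQ
    funext x
    simp only [einsteinQuartic, palindromicQuartic]
    ring
  subst hQ
  have hn' : (3 : ℝ) ≤ n := by exact_mod_cast hn
  have hp1' : (1 : ℝ) ≤ p := by exact_mod_cast hp1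
  have hp2' : (p : ℝ) ≤ n - 1 := by exact_mod_cast hp2
  have hcont : ContinuousOn (einsteinQuartic n p) (Set.Icc 0 1) := by
    unfold einsteinQuartic palindromicQuartic
    fun_prop
  obtain ⟨a, ha, b, hb, hQa, hQb⟩ := exists_zero_Ioo_zero_Ioo_of_pos_neg_pos hcont
    (by norm_num) (by norm_num) (einsteinQuartic_zero_pos p (by linarith))
    (einsteinQuartic_one_half_neg hn hp1 hp2) (einsteinQuartic_one_pos (by linarith) (by linarith))
  exact ⟨a, b, ha.1, ha.2.trans hb.1, hb.2, hQa, hQb,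
    palindromicQuartic_one_div_eq_zero hQa, palindromicQuartic_one_div_eq_zero hQb⟩
end

section
/- Let S_{n,p}(x) = n²(n+1)(3n+4)(2n-p+1)x⁴ + 4n(n+1)(2n-p+1)(n²-4np-2p²-8p-2)x³ + 2(n⁵-19n⁴p-11n⁴+36n³p²-18n³p-30n³+22n²p³+130n²p²+54n²p-22n²-16np⁴+4np³+108np²+68np-4n-16p⁴-16p³+16p²+16p)x² - 8(p+1)(n-2p)(n+p+1)(n²-6np-2n+2p²-4p-2)x + 8(p+1)²(n-2p)²(n+p+1). For integers n ≥ 3 and 1 ≤ p ≤ n-1 with p ≠ n/2, S_{n,p}(0) > 0 and S_{n,p}(2(p+1)/n) < 0. -/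
/-!
At both points the quartic factors completely: `S(0) = 8(p+1)²(n-2p)²(n+p+1)` and
`S(2(p+1)/n) = -(16/n²)(p+1)²(n-p+1)²(n(p-1)+4p²+4p)`, so the signs are read off the factors.
-/

section Quartic

variable {K : Type*} [Field K]

def quarticS (n p x : K) : K :=
  n^2*(n+1)*(3*n+4)*(2*n-p+1)*x^4
    + 4*n*(n+1)*(2*n-p+1)*(n^2-4*n*p-2*p^2-8*p-2)*x^3
    + 2*(n^5-19*n^4*p-11*n^4+36*n^3*p^2-18*n^3*p-30*n^3+22*n^2*p^3+130*n^2*p^2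
        +54*n^2*p-22*n^2-16*n*p^4+4*n*p^3+108*n*p^2+68*n*p-4*n
        -16*p^4-16*p^3+16*p^2+16*p)*x^2
    - 8*(p+1)*(n-2*p)*(n+p+1)*(n^2-6*n*p-2*n+2*p^2-4*p-2)*x
    + 8*(p+1)^2*(n-2*p)^2*(n+p+1)

theorem quarticS_zero (n p : K) : quarticS n p 0 = 8*(p+1)^2*(n-2*p)^2*(n+p+1) := by
  simp [quarticS]

theorem quarticS_two_mul_add_one_div {n : K} (hn : n ≠ 0) (p : K) :
    quarticS n p (2*(p+1)/n) = -(16/n^2)*(p+1)^2*(n-p+1)^2*(n*(p-1)+4*p^2+4*p) := by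
  unfold quarticS
  field_simp
  ring

variable [LinearOrder K] [IsStrictOrderedRing K]

theorem quarticS_zero_pos {n p : K} (hp : p + 1 ≠ 0) (hnp : n - 2*p ≠ 0)
    (hnp1 : 0 < n + p + 1) : 0 < quarticS n p 0 := by
  rw [quarticS_zero]
  exact mul_pos (mul_pos (mul_pos (by norm_num) (sq_pos_of_ne_zero hp))
    (sq_pos_of_ne_zero hnp)) hnp1

theorem quarticS_two_mul_add_one_div_neg {n p : K} (hn : 0 < n) (hp : 1 ≤ p)
    (hpn : p ≤ n - 1) : quarticS n p (2*(p+1)/n) < 0 := by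
  rw [quarticS_two_mul_add_one_div hn.ne']
  have hp1 : 0 < p + 1 := by linarith
  have hnp : 0 < n - p + 1 := by linarith
  have hlast : 0 < n*(p-1)+4*p^2+4*p := by
    have : 0 ≤ n*(p-1) := mul_nonneg hn.le (by linarith)
    nlinarith
  have : 0 < 16/n^2*(p+1)^2*(n-p+1)^2*(n*(p-1)+4*p^2+4*p) := by positivity
  linarith

end Quartic

theorem stmt_13 (n p : ℤ) (hn : 3 ≤ n) (hp1 : 1 ≤ p) (hp2 : p ≤ n - 1) (hnp : 2*p ≠ n)
    (S : ℝ → ℝ)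
    (hS : S = fun x => (n : ℝ)^2*(n+1)*(3*n+4)*(2*n-p+1)*x^4
      + 4*n*(n+1)*(2*n-p+1)*(n^2-4*n*p-2*p^2-8*p-2)*x^3
      + 2*(n^5-19*n^4*p-11*n^4+36*n^3*p^2-18*n^3*p-30*n^3+22*n^2*p^3+130*n^2*p^2
          +54*n^2*p-22*n^2-16*n*p^4+4*n*p^3+108*n*p^2+68*n*p-4*n
          -16*p^4-16*p^3+16*p^2+16*p)*x^2
      - 8*(p+1)*(n-2*p)*(n+p+1)*(n^2-6*n*p-2*n+2*p^2-4*p-2)*x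
      + 8*(p+1)^2*(n-2*p)^2*(n+p+1)) :
    S 0 > 0 ∧ S (2*((p : ℝ)+1)/n) < 0 := by
  have hS' : S = quarticS (n : ℝ) p := hS
  have hnR : (3 : ℝ) ≤ n := by exact_mod_cast hn
  have hpR : (1 : ℝ) ≤ p := by exact_mod_cast hp1
  have hpnR : (p : ℝ) ≤ n - 1 := by exact_mod_cast hp2
  have hnpR : (n : ℝ) - 2*p ≠ 0 := by
    rw [sub_ne_zero]
    exact_mod_cast hnp.symm
  rw [hS']
  exact ⟨quarticS_zero_pos (by linarith) hnpR (by linarith),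
    quarticS_two_mul_add_one_div_neg (by linarith) hpR hpnR⟩
end
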